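/- arXiv:1305.0976 — 7 statements merged into one kernel-verified Lean document; each statement's English description precedes it below -/
import Mathlib

section
/- Let f : (0,∞) → [0,∞) be nonincreasing with finite Laplace transform, and let n, m ≥ 0 be integers. Then for every r > 0, f(r) ≤ (1/γ(n+m+1, 1)) · r^{-(n+m+1)} · |(d/du)ⁿ 𝓛[sᵐ f(s)](u)| evaluated at u = 1/r, where γ(a,x) = ∫₀ˣ e^{-u} u^{a-1} du is the lower incomplete gamma function and 𝓛 g(u) = ∫₀^∞ e^{-su} g(s) ds. -/
open MeasureTheory

theorem stmt_2 (f : ℝ → ℝ) (hf0 : ∀ s ∈ Set.Ioi (0:ℝ), 0 ≤ f s)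
    (hmono : AntitoneOn f (Set.Ioi 0)) (n m : ℕ) (L : ℝ → ℝ)
    (hL : ∀ u > (0:ℝ), L u = ∫ s in Set.Ioi (0:ℝ), Real.exp (-s * u) * s ^ m * f s)
    (hInt : ∀ u > (0:ℝ),
      IntegrableOn (fun s => Real.exp (-s * u) * s ^ (n + m) * f s) (Set.Ioi 0))
    (hderiv : ∀ u > (0:ℝ),
      iteratedDeriv n L u =
        (-1 : ℝ) ^ n * ∫ s in Set.Ioi (0:ℝ), Real.exp (-s * u) * s ^ (n + m) * f s)
    (r : ℝ) (hr : 0 < r) :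
    f r ≤ (1 / ∫ u in (0:ℝ)..1, Real.exp (-u) * u ^ (n + m)) *
      r ^ (-((n : ℤ) + m + 1)) * |iteratedDeriv n L r⁻¹| := by
  set k := n + m with hk
  set γ := ∫ u in (0:ℝ)..1, Real.exp (-u) * u ^ k with hγ
  have hrinv : (0:ℝ) < r⁻¹ := inv_pos.mpr hr
  set I := ∫ s in Set.Ioi (0:ℝ), Real.exp (-s * r⁻¹) * s ^ k * f s with hI
  -- γ > 0
  have hcont : Continuous (fun u : ℝ => Real.exp (-u) * u ^ k) := by continuity
  have hγpos : 0 < γ := by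
    apply intervalIntegral.intervalIntegral_pos_of_pos_on
      (hcont.intervalIntegrable 0 1)
    · intro x hx
      exact mul_pos (Real.exp_pos _) (pow_pos hx.1 k)
    · norm_num
  -- I ≥ 0
  have hInonneg : 0 ≤ I := by
    apply setIntegral_nonneg measurableSet_Ioi
    intro s hs
    exact mul_nonneg (mul_nonneg (Real.exp_pos _).le (pow_nonneg (le_of_lt hs) k))
      (hf0 s hs)
  -- |deriv| = I
  have habs : |iteratedDeriv n L r⁻¹| = I := by
    rw [hderiv r⁻¹ hrinv, abs_mul, abs_pow, abs_neg, abs_one, one_pow, one_mul,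
      abs_of_nonneg hInonneg]
  -- integrability
  have hIntI := hInt r⁻¹ hrinv
  have hIntIoc : IntegrableOn (fun s => Real.exp (-s * r⁻¹) * s ^ k * f s)
      (Set.Ioc 0 r) := hIntI.mono_set Set.Ioc_subset_Ioi_self
  -- lower bound on Ioc integral by f r integral
  have hcont2 : Continuous (fun s : ℝ => Real.exp (-s * r⁻¹) * s ^ k * f r) := by
    continuity
  have step1 : ∫ s in Set.Ioc (0:ℝ) r, Real.exp (-s * r⁻¹) * s ^ k * f r ≤
      ∫ s in Set.Ioc (0:ℝ) r, Real.exp (-s * r⁻¹) * s ^ k * f s := by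
    apply setIntegral_mono_on (hcont2.integrableOn_Ioc) hIntIoc measurableSet_Ioc
    intro s hs
    have := hmono (Set.mem_Ioi.mpr hs.1) (Set.mem_Ioi.mpr hr) hs.2
    exact mul_le_mul_of_nonneg_left this
      (mul_nonneg (Real.exp_pos _).le (pow_nonneg hs.1.le k))
  have step2 : ∫ s in Set.Ioc (0:ℝ) r, Real.exp (-s * r⁻¹) * s ^ k * f s ≤ I := by
    apply setIntegral_mono_set hIntI
    · filter_upwards [ae_restrict_mem measurableSet_Ioi] with s hs
      exact mul_nonneg (mul_nonneg (Real.exp_pos _).le (pow_nonneg (le_of_lt hs) k))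
        (hf0 s hs)
    · exact Filter.Eventually.of_forall Set.Ioc_subset_Ioi_self
  -- compute the Ioc integral: = f r * (r^(k+1) * γ)
  have hsub : ∫ s in (0:ℝ)..r, Real.exp (-s * r⁻¹) * s ^ k = r ^ (k+1) * γ := by
    have := intervalIntegral.integral_comp_mul_right
      (fun u : ℝ => Real.exp (-u) * u ^ k) (ne_of_gt hrinv) (a := 0) (b := r)
    simp only [zero_mul, mul_inv_cancel₀ (ne_of_gt hr), smul_eq_mul, inv_inv] at this
    have h2 : ∀ s ∈ Set.uIcc (0:ℝ) r,
        Real.exp (-(s * r⁻¹)) * (s * r⁻¹) ^ k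
          = r⁻¹ ^ k * (Real.exp (-s * r⁻¹) * s ^ k) := by
      intro s _; rw [mul_pow]; ring_nf
    rw [intervalIntegral.integral_congr h2, intervalIntegral.integral_const_mul] at this
    have hrk : (r:ℝ)⁻¹ ^ k ≠ 0 := pow_ne_zero _ (inv_ne_zero (ne_of_gt hr))
    field_simp at this ⊢
    rw [pow_succ]
    have h3 : r ^ k * (1 / r) ^ k = 1 := by rw [← mul_pow, mul_one_div_cancel hr.ne', one_pow]
    linear_combination r ^ k * this - (∫ x in (0:ℝ)..r, Real.exp (-(x / r)) * x ^ k) * h3 - r ^ k * r * hγ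
  have hval : ∫ s in Set.Ioc (0:ℝ) r, Real.exp (-s * r⁻¹) * s ^ k * f r
      = f r * (r ^ (k+1) * γ) := by
    rw [← intervalIntegral.integral_of_le hr.le, intervalIntegral.integral_mul_const,
      hsub]
    ring
  -- combine
  have key : f r * (r ^ (k+1) * γ) ≤ I := by
    rw [← hval]; exact le_trans step1 step2
  have hrpow : (0:ℝ) < r ^ (k+1) := pow_pos hr _
  have hzpow : r ^ (-((n : ℤ) + m + 1)) = (r ^ (k+1))⁻¹ := by
    rw [← zpow_natCast r (k+1), ← zpow_neg]
    congr 1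
  rw [habs, hzpow]
  have h1 : f r ≤ I / (r ^ (k+1) * γ) := by
    rw [le_div_iff₀ (by positivity)]
    linarith [key]
  calc f r ≤ I / (r ^ (k+1) * γ) := h1
    _ = 1 / γ * (r ^ (k+1))⁻¹ * I := by rw [div_eq_mul_inv, mul_inv]; ring
end

section
/- Let φ : [0,∞) → [0,∞) be continuous, strictly increasing to infinity with φ(0)=0, and suppose φ satisfies WUSC(α, θ, C) with α > 0 and C ∈ [1,∞). Then φ^{-1} satisfies WLSC(1/α, φ(θ), C^{-1/α}): for all s ≥ 1 and y > φ(θ), φ^{-1}(s y) ≥ C^{-1/α} s^{1/α} φ^{-1}(y). -/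
theorem stmt_9 (α θ C : ℝ) (hα : 0 < α) (hθ : 0 ≤ θ) (hC : 1 ≤ C)
    (φ φinv : ℝ → ℝ) (hφ0 : φ 0 = 0) (hcont : Continuous φ)
    (hmono : StrictMonoOn φ (Set.Ici 0)) (htop : Filter.Tendsto φ Filter.atTop Filter.atTop)
    (hnonneg : ∀ u ≥ (0:ℝ), 0 ≤ φ u)
    (hinv_nonneg : ∀ y ≥ (0:ℝ), 0 ≤ φinv y)
    (hinv : ∀ y ≥ (0:ℝ), φ (φinv y) = y)
    (hWUSC : ∀ lam ≥ (1:ℝ), ∀ u > θ, φ (lam * u) ≤ C * lam ^ α * φ u) :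
    ∀ s ≥ (1:ℝ), ∀ y > φ θ, C ^ (-1 / α) * s ^ (1 / α) * φinv y ≤ φinv (s * y) := by
  intro s hs y hy
  have hC0 : (0:ℝ) < C := lt_of_lt_of_le one_pos hC
  have hs0 : (0:ℝ) < s := lt_of_lt_of_le one_pos hs
  have hφθ : 0 ≤ φ θ := hnonneg θ hθ
  have hy0 : 0 < y := lt_of_le_of_lt hφθ hy
  have hsy0 : 0 < s * y := mul_pos hs0 hy0
  set u := φinv y with hu
  have hu0 : 0 ≤ u := hinv_nonneg y hy0.le
  have hφu : φ u = y := hinv y hy0.le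
  have huθ : u > θ := by
    by_contra h
    push_neg at h
    have := hmono.monotoneOn (Set.mem_Ici.mpr hu0) (Set.mem_Ici.mpr hθ) h
    rw [hφu] at this
    exact absurd hy (not_lt.mpr this)
  set lam := C ^ (-1 / α) * s ^ (1 / α) with hlam
  have hlam0 : 0 ≤ lam := mul_nonneg (Real.rpow_nonneg hC0.le _) (Real.rpow_nonneg hs0.le _)
  have hinvsy0 : 0 ≤ φinv (s * y) := hinv_nonneg _ hsy0.le
  have hinvmono : φinv y ≤ φinv (s * y) := by
    have h1 : φ (φinv y) ≤ φ (φinv (s * y)) := by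
      rw [hinv y hy0.le, hinv _ hsy0.le]
      nlinarith
    by_contra h
    push_neg at h
    exact absurd (hmono (Set.mem_Ici.mpr hinvsy0) (Set.mem_Ici.mpr hu0) h) (not_lt.mpr h1)
  rcases le_or_gt lam 1 with hl | hl
  · calc lam * φinv y ≤ 1 * φinv y := mul_le_mul_of_nonneg_right hl hu0
      _ = φinv y := one_mul _
      _ ≤ φinv (s * y) := hinvmono
  · have key := hWUSC lam hl.le u huθ
    have hCα : (C ^ (-1 / α)) ^ α = C⁻¹ := by
      rw [← Real.rpow_mul hC0.le]
      have : -1 / α * α = -1 := by field_simp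
      rw [this, Real.rpow_neg_one]
    have hsα : (s ^ (1 / α)) ^ α = s := by
      rw [← Real.rpow_mul hs0.le]
      have : 1 / α * α = 1 := by field_simp
      rw [this, Real.rpow_one]
    have hlamα : lam ^ α = C⁻¹ * s := by
      rw [hlam, Real.mul_rpow (Real.rpow_nonneg hC0.le _) (Real.rpow_nonneg hs0.le _), hCα, hsα]
    have key2 : φ (lam * u) ≤ s * y := by
      rw [hlamα, hφu] at key
      calc φ (lam * u) ≤ C * (C⁻¹ * s) * y := key
        _ = s * y := by field_simp
    have h2 : φ (lam * u) ≤ φ (φinv (s * y)) := by rw [hinv _ hsy0.le]; exact key2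
    by_contra h
    push_neg at h
    have := hmono (Set.mem_Ici.mpr hinvsy0) (Set.mem_Ici.mpr (mul_nonneg hlam0 hu0)) h
    exact absurd this (not_lt.mpr h2)
end

section
/- Let α > 0, 0 < K < ∞, θ ≥ 0, C₀ ∈ (0,1], and let Ψ : [0,∞) → [0,∞) be increasing with Ψ(0) = 0 satisfying WLSC(α, θ, C₀). Then there is a constant C = C(d, α, C₀, K) such that for every t > 0 with t·Ψ(θ) < K, ∫_{ℝ^d} e^{-t Ψ(|ξ|)} dξ ≤ C · (Ψ^{-1}(K/t))^d, where Ψ^{-1} is the inverse function of Ψ. Moreover one can take C = (ω_d/d)·Σ_{n=1}^∞ n^{d/α} e^{-C₀ K (n-1)}, with ω_d the surface measure of the unit sphere in ℝ^d. -/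
open MeasureTheory

lemma aux_summable_14 (s c : ℝ) (hc : 0 < c) :
    Summable fun n : ℕ => ((n : ℝ) + 1) ^ s * Real.exp (-c * n) := by
  obtain ⟨k, hk⟩ : ∃ k : ℕ, s ≤ k := exists_nat_ge s
  have h1 : Summable fun n : ℕ => ((n : ℝ) + 1) ^ (k : ℕ) * Real.exp (-c * ((n : ℝ) + 1)) := by
    have h0 := (Real.summable_pow_mul_exp_neg_nat_mul k hc).comp_injective Nat.succ_injective
    refine h0.congr fun n => ?_
    simp only [Function.comp, Nat.succ_eq_add_one]
    push_cast
    ring_nf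
  have h2 : Summable fun n : ℕ =>
      Real.exp c * (((n : ℝ) + 1) ^ (k : ℕ) * Real.exp (-c * ((n : ℝ) + 1))) := h1.mul_left _
  refine h2.of_nonneg_of_le (fun n => by positivity) (fun n => ?_)
  have hb : (1 : ℝ) ≤ (n : ℝ) + 1 := by
    have := Nat.cast_nonneg (α := ℝ) n; linarith
  have hpow : ((n : ℝ) + 1) ^ s ≤ ((n : ℝ) + 1) ^ (k : ℕ) := by
    have := Real.rpow_le_rpow_of_exponent_le hb hk
    rwa [Real.rpow_natCast] at this
  have he : Real.exp c * Real.exp (-c * ((n : ℝ) + 1)) = Real.exp (-c * n) := by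
    rw [← Real.exp_add]; ring_nf
  calc ((n : ℝ) + 1) ^ s * Real.exp (-c * n)
      ≤ ((n : ℝ) + 1) ^ (k : ℕ) * Real.exp (-c * n) :=
        mul_le_mul_of_nonneg_right hpow (Real.exp_nonneg _)
    _ = Real.exp c * (((n : ℝ) + 1) ^ (k : ℕ) * Real.exp (-c * ((n : ℝ) + 1))) := by
        rw [← he]; ring

theorem stmt_14 (d : ℕ) (hd : 1 ≤ d) (α K θ C₀ : ℝ)
    (hα : 0 < α) (hK : 0 < K) (hθ : 0 ≤ θ) (hC₀0 : 0 < C₀) (hC₀1 : C₀ ≤ 1)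
    (Ψ Ψinv : ℝ → ℝ) (hΨ0 : Ψ 0 = 0) (hΨnonneg : ∀ u ≥ (0:ℝ), 0 ≤ Ψ u)
    (hΨmono : StrictMonoOn Ψ (Set.Ici 0))
    (hWLSC : ∀ lam ≥ (1:ℝ), ∀ u > θ, C₀ * lam ^ α * Ψ u ≤ Ψ (lam * u))
    (hinv_nonneg : ∀ y ≥ (0:ℝ), 0 ≤ Ψinv y)
    (hinv : ∀ y ≥ (0:ℝ), Ψ (Ψinv y) = y)
    (t : ℝ) (ht : 0 < t) (htθ : t * Ψ θ < K) :
    (∫ ξ : EuclideanSpace ℝ (Fin d), Real.exp (-t * Ψ ‖ξ‖)) ≤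
      ((2 * Real.pi ^ ((d : ℝ) / 2) / Real.Gamma ((d : ℝ) / 2)) / d *
          ∑' n : ℕ, ((n : ℝ) + 1) ^ ((d : ℝ) / α) * Real.exp (-(C₀ * K) * n)) *
        (Ψinv (K / t)) ^ d := by
  haveI : Nonempty (Fin d) := ⟨⟨0, hd⟩⟩
  set r := Ψinv (K / t) with hr_def
  have hdR : (0 : ℝ) < d := by exact_mod_cast hd
  have hΓpos : 0 < Real.Gamma ((d : ℝ) / 2) := Real.Gamma_pos_of_pos (by positivity)
  have hKt : (0 : ℝ) ≤ K / t := le_of_lt (div_pos hK ht)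
  have hΨr : Ψ r = K / t := hinv _ hKt
  have hr0 : 0 ≤ r := hinv_nonneg _ hKt
  have hrθ : θ < r := by
    by_contra h
    push_neg at h
    have hle : Ψ r ≤ Ψ θ := hΨmono.monotoneOn hr0 hθ h
    rw [hΨr, div_le_iff₀ ht] at hle
    nlinarith
  have hrpos : 0 < r := lt_of_le_of_lt hθ hrθ
  have hcK : 0 < C₀ * K := mul_pos hC₀0 hK
  -- the summable series
  have hsum : Summable fun n : ℕ => ((n : ℝ) + 1) ^ ((d : ℝ) / α) * Real.exp (-(C₀ * K) * n) :=
    aux_summable_14 _ _ hcK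
  have hSnn : 0 ≤ ∑' n : ℕ, ((n : ℝ) + 1) ^ ((d : ℝ) / α) * Real.exp (-(C₀ * K) * n) :=
    tsum_nonneg fun n => by positivity
  -- annuli
  set R : ℕ → ℝ := fun n => (n : ℝ) ^ (α⁻¹) * r with hR_def
  set A : ℕ → Set (EuclideanSpace ℝ (Fin d)) :=
    fun n => Metric.ball 0 (R (n + 1)) \ Metric.ball 0 (R n) with hA_def
  have hRnn : ∀ n : ℕ, 0 ≤ R n := fun n => by
    simp only [hR_def]; positivity
  have hmemA : ∀ (n : ℕ) (ξ : EuclideanSpace ℝ (Fin d)),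
      ξ ∈ A n ↔ ‖ξ‖ < R (n + 1) ∧ ¬ ‖ξ‖ < R n := by
    intro n ξ
    simp [hA_def, Metric.mem_ball, dist_zero_right]
  have key1 : ∀ y : ℝ, 0 ≤ y → (y ^ α) ^ (α⁻¹) = y := by
    intro y hy
    rw [← Real.rpow_mul hy, mul_inv_cancel₀ hα.ne', Real.rpow_one]
  have key2 : ∀ y : ℝ, 0 ≤ y → (y ^ (α⁻¹)) ^ α = y := by
    intro y hy
    rw [← Real.rpow_mul hy, inv_mul_cancel₀ hα.ne', Real.rpow_one]
  have hcover : (⋃ n, A n) = Set.univ := by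
    ext ξ
    simp only [Set.mem_univ, iff_true, Set.mem_iUnion]
    have hx : (0 : ℝ) ≤ ‖ξ‖ := norm_nonneg ξ
    have hxr : (0 : ℝ) ≤ ‖ξ‖ / r := div_nonneg hx hrpos.le
    refine ⟨⌊(‖ξ‖ / r) ^ α⌋₊, (hmemA _ _).mpr ⟨?_, ?_⟩⟩
    · have h2 : (‖ξ‖ / r) ^ α < (⌊(‖ξ‖ / r) ^ α⌋₊ : ℝ) + 1 := Nat.lt_floor_add_one _
      have h3 := Real.rpow_lt_rpow (Real.rpow_nonneg hxr α) h2 (inv_pos.mpr hα)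
      rw [key1 _ hxr] at h3
      rw [hR_def]
      simp only
      push_cast
      exact (div_lt_iff₀ hrpos).mp h3
    · push_neg
      have h1 : (⌊(‖ξ‖ / r) ^ α⌋₊ : ℝ) ≤ (‖ξ‖ / r) ^ α :=
        Nat.floor_le (Real.rpow_nonneg hxr α)
      have h3 := Real.rpow_le_rpow (Nat.cast_nonneg _) h1 (inv_pos.mpr hα).le
      rw [key1 _ hxr] at h3
      have h4 : (⌊(‖ξ‖ / r) ^ α⌋₊ : ℝ) ^ (α⁻¹) * r ≤ (‖ξ‖ / r) * r :=
        mul_le_mul_of_nonneg_right h3 hrpos.le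
      rwa [div_mul_cancel₀ _ hrpos.ne'] at h4
  have hmeasA : ∀ n, MeasurableSet (A n) :=
    fun n => measurableSet_ball.diff measurableSet_ball
  -- pointwise bound on annuli
  have hbound : ∀ (n : ℕ) (ξ : EuclideanSpace ℝ (Fin d)), ξ ∈ A n →
      Real.exp (-t * Ψ ‖ξ‖) ≤ Real.exp (-(C₀ * K) * n) := by
    intro n ξ hξ
    rcases Nat.eq_zero_or_pos n with rfl | hn
    · have hΨ : 0 ≤ Ψ ‖ξ‖ := hΨnonneg _ (norm_nonneg _)
      simp only [Nat.cast_zero, mul_zero]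
      rw [Real.exp_le_exp]
      nlinarith
    · obtain ⟨-, hlo⟩ := (hmemA n ξ).mp hξ
      push_neg at hlo
      set lam := ‖ξ‖ / r with hlam_def
      have hRn1 : (1 : ℝ) ≤ (n : ℝ) ^ (α⁻¹) := by
        have h1n : (1 : ℝ) ≤ (n : ℝ) := by exact_mod_cast hn
        calc (1 : ℝ) = (1 : ℝ) ^ (α⁻¹) := (Real.one_rpow _).symm
          _ ≤ (n : ℝ) ^ (α⁻¹) := Real.rpow_le_rpow zero_le_one h1n (by positivity)
      have hnlam : (n : ℝ) ^ (α⁻¹) ≤ lam := by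
        rw [hlam_def, le_div_iff₀ hrpos]
        exact hlo
      have hlam1 : (1 : ℝ) ≤ lam := le_trans hRn1 hnlam
      have hlamn : (n : ℝ) ≤ lam ^ α := by
        have := Real.rpow_le_rpow (by positivity) hnlam hα.le
        rwa [key2 _ (Nat.cast_nonneg _)] at this
      have hlamr : lam * r = ‖ξ‖ := div_mul_cancel₀ _ hrpos.ne'
      have hW := hWLSC lam hlam1 r hrθ
      rw [hlamr, hΨr] at hW
      rw [Real.exp_le_exp]
      have hlampow : 0 ≤ lam ^ α := Real.rpow_nonneg (by positivity) α
      have hC : C₀ * (n : ℝ) * (K / t) ≤ Ψ ‖ξ‖ := by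
        have h5 : C₀ * (n : ℝ) * (K / t) ≤ C₀ * lam ^ α * (K / t) :=
          mul_le_mul_of_nonneg_right (mul_le_mul_of_nonneg_left hlamn hC₀0.le) hKt
        linarith
      have hD : t * (C₀ * (n : ℝ) * (K / t)) ≤ t * Ψ ‖ξ‖ :=
        mul_le_mul_of_nonneg_left hC ht.le
      have hE : t * (C₀ * (n : ℝ) * (K / t)) = C₀ * K * n := by
        field_simp
      linarith [hE ▸ hD]
  -- measurability
  have hΨmax_mono : Monotone fun u : ℝ => Ψ (max u 0) := by
    intro a b hab
    exact hΨmono.monotoneOn (le_max_right a 0) (le_max_right b 0)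
      (max_le_max hab le_rfl)
  have hfeq : (fun ξ : EuclideanSpace ℝ (Fin d) => Real.exp (-t * Ψ ‖ξ‖)) =
      fun ξ => Real.exp (-t * Ψ (max ‖ξ‖ 0)) := by
    funext ξ; rw [max_eq_left (norm_nonneg ξ)]
  have hmeas : Measurable fun ξ : EuclideanSpace ℝ (Fin d) => Real.exp (-t * Ψ ‖ξ‖) := by
    rw [hfeq]
    exact Real.measurable_exp.comp
      (((hΨmax_mono.measurable).comp measurable_norm).const_mul (-t))
  -- pass to lintegral
  rw [integral_eq_lintegral_of_nonneg_ae
    (Filter.Eventually.of_forall fun ξ => Real.exp_nonneg _) hmeas.aestronglyMeasurable]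
  refine ENNReal.toReal_le_of_le_ofReal (by positivity) ?_
  -- per-annulus bound
  have hterm : ∀ n : ℕ,
      (∫⁻ ξ in A n, ENNReal.ofReal (Real.exp (-t * Ψ ‖ξ‖))) ≤
        ENNReal.ofReal ((2 * Real.pi ^ ((d : ℝ) / 2) / Real.Gamma ((d : ℝ) / 2)) / d *
          (((n : ℝ) + 1) ^ ((d : ℝ) / α) * Real.exp (-(C₀ * K) * n)) * r ^ d) := by
    intro n
    have hRn1nn : 0 ≤ R (n + 1) := hRnn (n + 1)
    calc (∫⁻ ξ in A n, ENNReal.ofReal (Real.exp (-t * Ψ ‖ξ‖)))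
        ≤ ∫⁻ _ in A n, ENNReal.ofReal (Real.exp (-(C₀ * K) * n)) :=
          setLIntegral_mono' (hmeasA n) fun ξ hξ =>
            ENNReal.ofReal_le_ofReal (hbound n ξ hξ)
      _ = ENNReal.ofReal (Real.exp (-(C₀ * K) * n)) * volume (A n) := setLIntegral_const _ _
      _ ≤ ENNReal.ofReal (Real.exp (-(C₀ * K) * n)) *
            volume (Metric.ball (0 : EuclideanSpace ℝ (Fin d)) (R (n + 1))) :=
          mul_le_mul_right (measure_mono Set.diff_subset) _
      _ = ENNReal.ofReal ((2 * Real.pi ^ ((d : ℝ) / 2) / Real.Gamma ((d : ℝ) / 2)) / d *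
            (((n : ℝ) + 1) ^ ((d : ℝ) / α) * Real.exp (-(C₀ * K) * n)) * r ^ d) := by
          rw [EuclideanSpace.volume_ball, Fintype.card_fin,
            ← ENNReal.ofReal_pow hRn1nn, ← ENNReal.ofReal_mul (by positivity),
            ← ENNReal.ofReal_mul (Real.exp_nonneg _)]
          congr 1
          have hsqrt : Real.sqrt Real.pi ^ d = Real.pi ^ ((d : ℝ) / 2) := by
            rw [Real.sqrt_eq_rpow, ← Real.rpow_natCast (Real.pi ^ ((1 : ℝ) / 2)) d,
              ← Real.rpow_mul Real.pi_pos.le]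
            norm_num
            ring_nf
          have hΓ : Real.Gamma ((d : ℝ) / 2 + 1) = (d : ℝ) / 2 * Real.Gamma ((d : ℝ) / 2) :=
            Real.Gamma_add_one (by positivity)
          have hRpow : R (n + 1) ^ d = ((n : ℝ) + 1) ^ ((d : ℝ) / α) * r ^ d := by
            rw [hR_def]
            simp only
            rw [mul_pow]
            congr 1
            rw [← Real.rpow_natCast ((((n + 1 : ℕ)) : ℝ) ^ α⁻¹) d,
              ← Real.rpow_mul (Nat.cast_nonneg _)]
            push_cast
            congr 1
            field_simp
          rw [hRpow]
          push_cast
          rw [hsqrt, hΓ]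
          field_simp
  -- main chain
  calc (∫⁻ ξ : EuclideanSpace ℝ (Fin d), ENNReal.ofReal (Real.exp (-t * Ψ ‖ξ‖)))
      = ∫⁻ ξ in ⋃ n, A n, ENNReal.ofReal (Real.exp (-t * Ψ ‖ξ‖)) := by
        rw [hcover, setLIntegral_univ]
    _ ≤ ∑' n : ℕ, ∫⁻ ξ in A n, ENNReal.ofReal (Real.exp (-t * Ψ ‖ξ‖)) :=
        lintegral_iUnion_le _ _
    _ ≤ ∑' n : ℕ, ENNReal.ofReal ((2 * Real.pi ^ ((d : ℝ) / 2) / Real.Gamma ((d : ℝ) / 2)) / d *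
          (((n : ℝ) + 1) ^ ((d : ℝ) / α) * Real.exp (-(C₀ * K) * n)) * r ^ d) :=
        ENNReal.tsum_le_tsum hterm
    _ = ENNReal.ofReal (∑' n : ℕ,
          (2 * Real.pi ^ ((d : ℝ) / 2) / Real.Gamma ((d : ℝ) / 2)) / d *
          (((n : ℝ) + 1) ^ ((d : ℝ) / α) * Real.exp (-(C₀ * K) * n)) * r ^ d) :=
        (ENNReal.ofReal_tsum_of_nonneg (fun n => by positivity)
          (((hsum.mul_left _).mul_right _))).symm
    _ = ENNReal.ofReal
        (((2 * Real.pi ^ ((d : ℝ) / 2) / Real.Gamma ((d : ℝ) / 2)) / d *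
            ∑' n : ℕ, ((n : ℝ) + 1) ^ ((d : ℝ) / α) * Real.exp (-(C₀ * K) * n)) * r ^ d) := by
        rw [tsum_mul_right, tsum_mul_left]
end

section
/- Let β > 0, C ≥ 1, θ ≥ 0, and let f : (0,∞) → [0,∞) be nonincreasing with Laplace transform 𝓛f(u) = ∫₀^∞ e^{-us} f(s) ds satisfying WUSC(−β, θ, C), i.e. 𝓛f(λu) ≤ C λ^{-β} 𝓛f(u) for λ ≥ 1, u > θ. Then there exists b = b(β, C) ∈ (0,1) (any b with 2C·γ(β,b) ≤ 1 − e^{-1} works, e.g. b = ((1−e^{-1})(β)/(2C))^{1/β} adjusted so that γ(β,b) ≤ b^β/β) such that f(r) ≥ (b/2)·e^b·r^{-1}·𝓛f(r^{-1}) for all 0 < r < b/θ. -/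
open MeasureTheory

lemma exp_int_Ioi {u : ℝ} (hu : 0 < u) (a : ℝ) :
    ∫ s in Set.Ioi a, Real.exp (-u * s) = Real.exp (-(u * a)) / u := by
  have h := MeasureTheory.integral_comp_mul_left_Ioi (fun x => Real.exp (-x)) a hu
  simp only [smul_eq_mul] at h
  calc ∫ s in Set.Ioi a, Real.exp (-u * s) = ∫ s in Set.Ioi a, Real.exp (-(u * s)) := by
        simp [neg_mul]
    _ = u⁻¹ * ∫ x in Set.Ioi (u * a), Real.exp (-x) := h
    _ = Real.exp (-(u * a)) / u := by
        rw [integral_exp_neg_Ioi]; ring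

lemma exp_int_Ioc {v s : ℝ} (hv : 0 < v) (hs : 0 < s) :
    ∫ t in Set.Ioc 0 s, Real.exp (-v * t) = (1 - Real.exp (-(v * s))) / v := by
  rw [← intervalIntegral.integral_of_le hs.le]
  have h := intervalIntegral.integral_comp_mul_left (a := (0:ℝ)) (b := s)
      (f := fun x => Real.exp x) (neg_ne_zero.mpr hv.ne')
  simp only [smul_eq_mul, mul_zero] at h
  rw [h, integral_exp, Real.exp_zero, neg_mul]
  field_simp
  ring

theorem stmt_15 (β C θ : ℝ) (hβ : 0 < β) (hC : 1 ≤ C) (hθ : 0 ≤ θ)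
    (f : ℝ → ℝ) (hf0 : ∀ s ∈ Set.Ioi (0:ℝ), 0 ≤ f s) (hmono : AntitoneOn f (Set.Ioi 0))
    (hInt : ∀ u > (0:ℝ), IntegrableOn (fun s => Real.exp (-u * s) * f s) (Set.Ioi 0))
    (hWUSC : ∀ lam ≥ (1:ℝ), ∀ u > θ,
      (∫ s in Set.Ioi (0:ℝ), Real.exp (-(lam * u) * s) * f s) ≤
        C * lam ^ (-β) * ∫ s in Set.Ioi (0:ℝ), Real.exp (-u * s) * f s) :
    ∃ b : ℝ, 0 < b ∧ b < 1 ∧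
      ∀ r : ℝ, 0 < r → r * θ < b →
        (b / 2) * Real.exp b * r⁻¹ * (∫ s in Set.Ioi (0:ℝ), Real.exp (-r⁻¹ * s) * f s) ≤
          f r := by
  have hC0 : (0:ℝ) < C := lt_of_lt_of_le one_pos hC
  have he1 : (0:ℝ) < 1 - Real.exp (-1) := by
    have : Real.exp (-1) < 1 := by
      rw [Real.exp_lt_one_iff]; norm_num
    linarith
  set A : ℝ := (β * (1 - Real.exp (-1)) / (2 * C)) ^ (β⁻¹) with hA
  have hApos : 0 < A := Real.rpow_pos_of_pos (by positivity) _
  set b : ℝ := min (1/2) A with hbdef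
  have hb0 : 0 < b := lt_min (by norm_num) hApos
  have hb1 : b < 1 := lt_of_le_of_lt (min_le_left _ _) (by norm_num)
  have hbkey : C * b ^ β / β ≤ (1 - Real.exp (-1)) / 2 := by
    have h1 : b ^ β ≤ A ^ β := Real.rpow_le_rpow hb0.le (min_le_right _ _) hβ.le
    have h2 : A ^ β = β * (1 - Real.exp (-1)) / (2 * C) := by
      rw [hA, ← Real.rpow_mul (by positivity), inv_mul_cancel₀ hβ.ne', Real.rpow_one]
    rw [h2] at h1
    rw [le_div_iff₀ (by positivity : (0:ℝ) < 2 * C)] at h1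
    rw [div_le_div_iff₀ hβ (by norm_num : (0:ℝ) < 2)]
    nlinarith [h1]
  refine ⟨b, hb0, hb1, ?_⟩
  intro r hr hrθ
  set u : ℝ := b / r with hu
  have hu0 : 0 < u := div_pos hb0 hr
  have hur : u * r = b := div_mul_cancel₀ b hr.ne'
  have huθ : θ < u := by
    rw [hu, lt_div_iff₀ hr]; linarith [hrθ, mul_comm r θ]
  set L : ℝ → ℝ := fun v => ∫ s in Set.Ioi (0:ℝ), Real.exp (-v * s) * f s with hL
  have hLnn : ∀ v : ℝ, 0 ≤ L v := fun v =>
    setIntegral_nonneg measurableSet_Ioi fun s hs =>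
      mul_nonneg (Real.exp_nonneg _) (hf0 s hs)
  -- pointwise bound
  have hpt : ∀ s : ℝ, 0 < s → s ≤ r →
      f s ≤ C / (1 - Real.exp (-1)) * u ^ β * s ^ (β - 1) * L u := by
    intro s hs hsr
    have hsu : 0 < s * u := mul_pos hs hu0
    have hsu1 : s * u < 1 := by
      have : s * u ≤ r * u := by nlinarith
      rw [mul_comm r u, hur] at this
      linarith
    set v : ℝ := s⁻¹ with hv
    have hv0 : 0 < v := inv_pos.mpr hs
    have claim1 : f s * (s * (1 - Real.exp (-1))) ≤ L v := by
      have hint_v := hInt v hv0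
      have hcont : Continuous fun t : ℝ => Real.exp (-v * t) :=
        Real.continuous_exp.comp (continuous_const.mul continuous_id)
      have step1 : (∫ t in Set.Ioc 0 s, Real.exp (-v * t) * f s) ≤
          ∫ t in Set.Ioc 0 s, Real.exp (-v * t) * f t := by
        apply setIntegral_mono_on (hcont.integrableOn_Ioc.mul_const _)
          (hint_v.mono_set Set.Ioc_subset_Ioi_self) measurableSet_Ioc
        intro t ht
        exact mul_le_mul_of_nonneg_left (hmono ht.1 hs ht.2) (Real.exp_nonneg _)
      have step2 : (∫ t in Set.Ioc 0 s, Real.exp (-v * t) * f s) =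
          f s * (s * (1 - Real.exp (-1))) := by
        rw [integral_mul_const, exp_int_Ioc hv0 hs, hv, inv_mul_cancel₀ hs.ne']
        field_simp
      have step3 : (∫ t in Set.Ioc 0 s, Real.exp (-v * t) * f t) ≤ L v := by
        apply setIntegral_mono_set hint_v
        · filter_upwards [ae_restrict_mem measurableSet_Ioi] with t ht
          exact mul_nonneg (Real.exp_nonneg _) (hf0 t ht)
        · exact (Set.Ioc_subset_Ioi_self).eventuallyLE
      rw [← step2]
      exact step1.trans step3
    have claim2 : L v ≤ C * (s * u) ^ β * L u := by
      set lam : ℝ := (s * u)⁻¹ with hlam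
      have hlam1 : 1 ≤ lam := by
        rw [hlam, le_inv_comm₀ one_pos hsu, inv_one]
        exact hsu1.le
      have hlamu : lam * u = v := by
        rw [hlam, hv]
        field_simp
      have hpow : lam ^ (-β) = (s * u) ^ β := by
        rw [hlam, Real.inv_rpow hsu.le, Real.rpow_neg hsu.le, inv_inv]
      have h := hWUSC lam hlam1 u huθ
      rw [hlamu, hpow] at h
      exact h
    have hsb : s ^ (β - 1) * s = s ^ β := by
      nth_rewrite 2 [← Real.rpow_one s]
      rw [← Real.rpow_add hs]
      ring_nf
    have hmulr : (s * u) ^ β = s ^ β * u ^ β := Real.mul_rpow hs.le hu0.le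
    have key := claim1.trans claim2
    rw [← mul_le_mul_iff_of_pos_right (show (0:ℝ) < s * (1 - Real.exp (-1)) by positivity)]
    have heq : C / (1 - Real.exp (-1)) * u ^ β * s ^ (β - 1) * L u *
        (s * (1 - Real.exp (-1))) = C * (s * u) ^ β * L u := by
      rw [hmulr, ← hsb]
      field_simp
    rw [heq]
    exact key
  -- split L u
  have hIoc : IntegrableOn (fun s => Real.exp (-u * s) * f s) (Set.Ioc 0 r) :=
    (hInt u hu0).mono_set Set.Ioc_subset_Ioi_self
  have hIoir : IntegrableOn (fun s => Real.exp (-u * s) * f s) (Set.Ioi r) :=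
    (hInt u hu0).mono_set (Set.Ioi_subset_Ioi hr.le)
  have hsplitL : L u = (∫ s in Set.Ioc 0 r, Real.exp (-u * s) * f s) +
      ∫ s in Set.Ioi r, Real.exp (-u * s) * f s := by
    rw [hL]
    simp only
    rw [← Set.Ioc_union_Ioi_eq_Ioi hr.le]
    exact setIntegral_union Set.Ioc_disjoint_Ioi_same measurableSet_Ioi hIoc hIoir
  -- head bound
  have hhead : (∫ s in Set.Ioc 0 r, Real.exp (-u * s) * f s) ≤ L u / 2 := by
    set K : ℝ := C / (1 - Real.exp (-1)) * u ^ β * L u with hK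
    have h1 : (∫ s in Set.Ioc 0 r, Real.exp (-u * s) * f s) ≤
        ∫ s in Set.Ioc 0 r, K * s ^ (β - 1) := by
      apply setIntegral_mono_on hIoc ?_ measurableSet_Ioc ?_
      · apply Integrable.const_mul
        rw [← IntegrableOn, ← intervalIntegrable_iff_integrableOn_Ioc_of_le hr.le]
        exact intervalIntegral.intervalIntegrable_rpow' (by linarith)
      · intro s hs
        have hexp : Real.exp (-u * s) ≤ 1 := by
          rw [Real.exp_le_one_iff]
          nlinarith [hs.1]
        calc Real.exp (-u * s) * f s ≤ 1 * f s :=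
              mul_le_mul_of_nonneg_right hexp (hf0 s hs.1)
          _ = f s := one_mul _
          _ ≤ C / (1 - Real.exp (-1)) * u ^ β * s ^ (β - 1) * L u := hpt s hs.1 hs.2
          _ = K * s ^ (β - 1) := by rw [hK]; ring
    have h2 : (∫ s in Set.Ioc 0 r, K * s ^ (β - 1)) = K * (r ^ β / β) := by
      rw [← intervalIntegral.integral_of_le hr.le, intervalIntegral.integral_const_mul,
        integral_rpow (Or.inl (by linarith))]
      rw [Real.zero_rpow (by linarith : β - 1 + 1 ≠ 0), sub_add_cancel, sub_zero]
    have h3 : K * (r ^ β / β) ≤ L u / 2 := by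
      have hur2 : u ^ β * r ^ β = b ^ β := by
        rw [← Real.mul_rpow hu0.le hr.le, hur]
      have h4 : K * (r ^ β / β) = (C * b ^ β / β) / (1 - Real.exp (-1)) * L u := by
        rw [hK, ← hur2]
        field_simp
      rw [h4]
      have h5 : (C * b ^ β / β) / (1 - Real.exp (-1)) ≤ 1 / 2 := by
        rw [div_le_div_iff₀ he1 (by norm_num : (0:ℝ) < 2)]
        linarith [hbkey, he1]
      have h6 := hLnn u
      nlinarith
    linarith [h1, h2 ▸ h1, h3]
  -- tail bound
  have htail : (∫ s in Set.Ioi r, Real.exp (-u * s) * f s) ≤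
      f r * (Real.exp (-b) / u) := by
    have h1 : (∫ s in Set.Ioi r, Real.exp (-u * s) * f s) ≤
        ∫ s in Set.Ioi r, Real.exp (-u * s) * f r := by
      apply setIntegral_mono_on hIoir ((exp_neg_integrableOn_Ioi r hu0).mul_const _)
        measurableSet_Ioi
      intro s hs
      exact mul_le_mul_of_nonneg_left
        (hmono (Set.mem_Ioi.mpr hr) (Set.mem_Ioi.mpr (hr.trans hs)) (le_of_lt hs))
        (Real.exp_nonneg _)
    have h2 : (∫ s in Set.Ioi r, Real.exp (-u * s) * f r) = f r * (Real.exp (-b) / u) := by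
      rw [integral_mul_const, exp_int_Ioi hu0 r, hur]
      ring
    linarith [h1, h2 ▸ h1]
  -- combine
  have hfr0 : 0 ≤ f r := hf0 r (Set.mem_Ioi.mpr hr)
  have hcomb : L u / 2 ≤ f r * (Real.exp (-b) / u) := by linarith [hsplitL, hhead, htail]
  have hee : Real.exp (-b) * Real.exp b = 1 := by
    rw [← Real.exp_add]; simp
  have hmain : u / 2 * Real.exp b * L u ≤ f r := by
    have h1 := mul_le_mul_of_nonneg_right hcomb
      (le_of_lt (mul_pos hu0 (Real.exp_pos b)))
    have h2 : f r * (Real.exp (-b) / u) * (u * Real.exp b) = f r := by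
      rw [Real.exp_neg]
      field_simp
    rw [h2] at h1
    linarith [h1]
  -- monotonicity of L
  have hrinv : 0 < r⁻¹ := inv_pos.mpr hr
  have hmonoL : L r⁻¹ ≤ L u := by
    apply setIntegral_mono_on (hInt r⁻¹ hrinv) (hInt u hu0) measurableSet_Ioi
    intro s hs
    apply mul_le_mul_of_nonneg_right _ (hf0 s hs)
    apply Real.exp_le_exp.mpr
    have hule : u ≤ r⁻¹ := by
      rw [hu, div_le_iff₀ hr, inv_mul_cancel₀ hr.ne']
      linarith
    have hs0 := Set.mem_Ioi.mp hs
    nlinarith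
  have hbr : b * r⁻¹ = u := by
    rw [hu, div_eq_mul_inv]
  calc b / 2 * Real.exp b * r⁻¹ * L r⁻¹ ≤ b / 2 * Real.exp b * r⁻¹ * L u := by
        apply mul_le_mul_of_nonneg_left hmonoL
        positivity
    _ = u / 2 * Real.exp b * L u := by rw [← hbr]; ring
    _ ≤ f r := hmain
end

section
/- Let ψ : [0,∞) → [0,∞) with ψ(0)=0 and suppose ψ(s) ≤ ψ*(s) ≤ π²·ψ(s) for all s ≥ 0 where ψ*(u) = sup_{s ≤ u} ψ(s), and suppose ψ*(λu) ≤ 2(λ²+1)ψ*(u) for all λ, u ≥ 0. If additionally ψ satisfies WLSC(α, 0, C₀) with α > 0, C₀ ∈ (0,1], then the generalized inverse ψ⁻(u) = inf{s ≥ 0 : ψ*(s) ≥ u} satisfies WUSC(1/α, 0, (π³/C₀)^{2/α}) and WLSC(1/2, 0, (C₀/π⁴)^{1/α}). -/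
set_option maxHeartbeats 1000000 in
theorem stmt_16 (α C₀ : ℝ) (hα : 0 < α) (hC₀0 : 0 < C₀) (hC₀1 : C₀ ≤ 1)
    (ψ ψstar ψminus : ℝ → ℝ) (hψ0 : ψ 0 = 0)
    (hstar : ∀ u : ℝ, ψstar u = sSup (ψ '' Set.Icc 0 u))
    (hcomp : ∀ s ≥ (0:ℝ), ψ s ≤ ψstar s ∧ ψstar s ≤ Real.pi ^ 2 * ψ s)
    (hquad : ∀ lam ≥ (0:ℝ), ∀ u ≥ (0:ℝ), ψstar (lam * u) ≤ 2 * (lam ^ 2 + 1) * ψstar u)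
    (hWLSC : ∀ lam ≥ (1:ℝ), ∀ u > (0:ℝ), C₀ * lam ^ α * ψ u ≤ ψ (lam * u))
    (hminus : ∀ u : ℝ, ψminus u = sInf {s : ℝ | 0 ≤ s ∧ u ≤ ψstar s}) :
    ∀ lam ≥ (1:ℝ), ∀ u > (0:ℝ),
      ψminus (lam * u) ≤ (Real.pi ^ 3 / C₀) ^ (2 / α) * lam ^ (1 / α) * ψminus u ∧
      (C₀ / Real.pi ^ 4) ^ (1 / α) * lam ^ ((1:ℝ) / 2) * ψminus u ≤ ψminus (lam * u) := by
  intro lam hlam u hu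
  have hπ : (3:ℝ) < Real.pi := Real.pi_gt_three
  have hπ0 : (0:ℝ) < Real.pi := by linarith
  have hπ2 : (9:ℝ) ≤ Real.pi ^ 2 := by nlinarith
  have hπ3 : (27:ℝ) ≤ Real.pi ^ 3 := by nlinarith
  have hπ4 : (81:ℝ) ≤ Real.pi ^ 4 := by nlinarith
  have hπ6 : (729:ℝ) ≤ Real.pi ^ 6 := by nlinarith [hπ4, hπ2, sq_nonneg (Real.pi^2)]
  -- ψ is nonnegative on [0, ∞)
  have hψnn : ∀ s ≥ (0:ℝ), 0 ≤ ψ s := by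
    intro s hs
    have h := hcomp s hs
    have h9 : (9:ℝ) ≤ Real.pi ^ 2 := by nlinarith
    nlinarith [h.1, h.2, h9]
  have hstnn : ∀ s ≥ (0:ℝ), 0 ≤ ψstar s := fun s hs =>
    le_trans (hψnn s hs) (hcomp s hs).1
  -- ψstar 0 = 0
  have hst0 : ψstar 0 = 0 := by
    rw [hstar 0, Set.Icc_self, Set.image_singleton, csSup_singleton, hψ0]
  -- monotonicity of ψstar on [0, ∞)
  have hmono : ∀ s t : ℝ, 0 ≤ s → s ≤ t → ψstar s ≤ ψstar t := by
    intro s t hs hst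
    rcases eq_or_lt_of_le (le_trans hs hst) with h0 | h0
    · have hs0 : s = 0 := le_antisymm (h0 ▸ hst) hs
      rw [hs0, ← h0]
    · have hbdd : ∀ y ∈ ψ '' Set.Icc 0 t, y ≤ 4 * ψstar t := by
        rintro y ⟨r, ⟨hr0, hrt⟩, rfl⟩
        have h1 : ψ r ≤ ψstar r := (hcomp r hr0).1
        have hq := hquad (r / t) (by positivity) t h0.le
        rw [div_mul_cancel₀ r (ne_of_gt h0)] at hq
        have hrt' : r / t ≤ 1 := by rw [div_le_one h0]; exact hrt
        have h2 : (r / t) ^ 2 ≤ 1 := by nlinarith [div_nonneg hr0 h0.le]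
        nlinarith [hstnn t h0.le]
      rw [hstar s, hstar t]
      exact csSup_le_csSup ⟨4 * ψstar t, fun y hy => hbdd y hy⟩
        ⟨ψ 0, ⟨0, ⟨le_refl 0, hs⟩, rfl⟩⟩
        (Set.image_mono (Set.Icc_subset_Icc_right hst))
  have hlamu : 0 < lam * u := by nlinarith
  -- the trivial case: ψ vanishes on (0, ∞)
  by_cases hzero : ∀ t > (0:ℝ), ψ t = 0
  · have hstz : ∀ v > (0:ℝ), ψstar v = 0 := by
      intro v hv
      rw [hstar v]
      have himg : ψ '' Set.Icc 0 v = {0} := by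
        apply Set.eq_singleton_iff_unique_mem.mpr
        constructor
        · exact ⟨0, ⟨le_refl 0, hv.le⟩, hψ0⟩
        · rintro y ⟨r, ⟨hr0, hrv⟩, rfl⟩
          rcases eq_or_lt_of_le hr0 with h | h
          · rw [← h, hψ0]
          · exact hzero r h
      rw [himg, csSup_singleton]
    have hempty : ∀ v > (0:ℝ), ψminus v = 0 := by
      intro v hv
      rw [hminus]
      have hset : {s : ℝ | 0 ≤ s ∧ v ≤ ψstar s} = ∅ := by
        ext s
        simp only [Set.mem_setOf_eq, Set.mem_empty_iff_false, iff_false, not_and]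
        intro hs0 hsv
        rcases eq_or_lt_of_le hs0 with h | h
        · rw [← h, hst0] at hsv; linarith
        · rw [hstz s h] at hsv; linarith
      rw [hset]
      exact Real.sInf_empty
    rw [hempty u hu, hempty (lam * u) hlamu, mul_zero, mul_zero]
    exact ⟨le_refl 0, le_refl 0⟩
  -- nontrivial case: there is u₀ > 0 with ψ u₀ > 0
  push_neg at hzero
  obtain ⟨u₀, hu₀pos, hψu₀ne⟩ := hzero
  have hψu₀ : 0 < ψ u₀ := lt_of_le_of_ne (hψnn u₀ hu₀pos.le) (Ne.symm hψu₀ne)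
  -- nonemptiness of the level sets
  have hne : ∀ v : ℝ, ∃ s : ℝ, 0 ≤ s ∧ v ≤ ψstar s := by
    intro v
    have hBpos : 0 < C₀ * ψ u₀ := mul_pos hC₀0 hψu₀
    set w : ℝ := max (v / (C₀ * ψ u₀)) 1 with hw
    have hw1 : (1:ℝ) ≤ w := le_max_right _ _
    set L : ℝ := w ^ (1 / α) with hLdef
    have hL1 : (1:ℝ) ≤ L := by
      have := Real.rpow_le_rpow_of_exponent_le hw1 (by positivity : (0:ℝ) ≤ 1 / α)
      rwa [Real.rpow_zero] at this
    have hLα : L ^ α = w := by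
      rw [hLdef, ← Real.rpow_mul (by linarith : (0:ℝ) ≤ w),
        one_div_mul_cancel (ne_of_gt hα), Real.rpow_one]
    refine ⟨L * u₀, by positivity, ?_⟩
    have h1 := hWLSC L hL1 u₀ hu₀pos
    have h2 : ψ (L * u₀) ≤ ψstar (L * u₀) := (hcomp _ (by positivity)).1
    have h3 : v ≤ C₀ * L ^ α * ψ u₀ := by
      rw [hLα]
      have : v / (C₀ * ψ u₀) ≤ w := le_max_left _ _
      calc v = (C₀ * ψ u₀) * (v / (C₀ * ψ u₀)) := by field_simp
        _ ≤ (C₀ * ψ u₀) * w := by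
            exact mul_le_mul_of_nonneg_left this hBpos.le
        _ = C₀ * w * ψ u₀ := by ring
    linarith
  -- α ≤ 2
  have hα2 : α ≤ 2 := by
    by_contra hcon
    push_neg at hcon
    set M : ℝ := 4 * Real.pi ^ 2 / C₀ with hM
    have hMpos : 0 < M := by positivity
    set L : ℝ := (M + 1) ^ (1 / (α - 2)) with hLdef
    have hM1 : (1:ℝ) ≤ M + 1 := by linarith
    have hα20 : (0:ℝ) < α - 2 := by linarith
    have hL1 : (1:ℝ) ≤ L := by
      have := Real.rpow_le_rpow_of_exponent_le hM1 (div_pos one_pos hα20).le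
      rwa [Real.rpow_zero] at this
    have hLpos : (0:ℝ) < L := by linarith
    have hLa : L ^ (α - 2) = M + 1 := by
      rw [hLdef, ← Real.rpow_mul (by linarith : (0:ℝ) ≤ M + 1),
        one_div_mul_cancel (ne_of_gt hα20), Real.rpow_one]
    have hsplit : L ^ α = (M + 1) * L ^ 2 := by
      have h2 : L ^ ((2:ℕ):ℝ) = L ^ (2:ℕ) := Real.rpow_natCast L 2
      calc L ^ α = L ^ ((α - 2) + 2) := by congr 1; ring
        _ = L ^ (α - 2) * L ^ ((2:ℕ):ℝ) := by
            rw [← Real.rpow_add hLpos]; norm_num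
        _ = (M + 1) * L ^ 2 := by rw [hLa, h2]
    have h1 := hWLSC L hL1 u₀ hu₀pos
    have h2 : ψ (L * u₀) ≤ ψstar (L * u₀) := (hcomp _ (by positivity)).1
    have h3 := hquad L (by linarith) u₀ hu₀pos.le
    have h4 := (hcomp u₀ hu₀pos.le).2
    have h5 := hstnn u₀ hu₀pos.le
    have hL2 : (1:ℝ) ≤ L ^ 2 := by nlinarith
    have hCM : C₀ * M = 4 * Real.pi ^ 2 := by
      rw [hM]; field_simp
    -- C₀ * L^α ≤ 2*(L^2+1)*π²  and  L^α = (M+1) L^2  give a contradiction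
    have h6 : C₀ * L ^ α ≤ 2 * (L ^ 2 + 1) * Real.pi ^ 2 := by
      have := le_trans h1 (le_trans h2 h3)
      nlinarith [sq_nonneg Real.pi, hψu₀]
    nlinarith [hsplit, hL2, hCM, hπ0, hC₀0]
  -- positivity of members of level sets
  have hspos : ∀ v > (0:ℝ), ∀ s : ℝ, 0 ≤ s → v ≤ ψstar s → 0 < s := by
    intro v hv s hs0 hsv
    rcases eq_or_lt_of_le hs0 with h | h
    · rw [← h, hst0] at hsv; linarith
    · exact h
  -- lower scaling for ψstar
  have hstarL : ∀ L ≥ (1:ℝ), ∀ s > (0:ℝ),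
      C₀ * L ^ α * ψstar s ≤ Real.pi ^ 2 * ψstar (L * s) := by
    intro L hL s hs
    have hP : (0:ℝ) ≤ L ^ α := Real.rpow_nonneg (by linarith) α
    calc C₀ * L ^ α * ψstar s ≤ C₀ * L ^ α * (Real.pi ^ 2 * ψ s) := by
          exact mul_le_mul_of_nonneg_left (hcomp s hs.le).2
            (mul_nonneg hC₀0.le hP)
      _ = Real.pi ^ 2 * (C₀ * L ^ α * ψ s) := by ring
      _ ≤ Real.pi ^ 2 * ψ (L * s) := by
          exact mul_le_mul_of_nonneg_left (hWLSC L hL s hs) (by positivity)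
      _ ≤ Real.pi ^ 2 * ψstar (L * s) := by
          exact mul_le_mul_of_nonneg_left (hcomp (L * s) (by positivity)).1
            (by positivity)
  -- upper scaling for ψstar with ratio ≥ 1
  have hstarU : ∀ L ≥ (1:ℝ), ∀ s ≥ (0:ℝ), ψstar (L * s) ≤ 4 * L ^ 2 * ψstar s := by
    intro L hL s hs
    have h1 := hquad L (by linarith) s hs
    have h2 := hstnn s hs
    have h3 : (0:ℝ) ≤ (L ^ 2 - 1) * ψstar s :=
      mul_nonneg (by nlinarith) h2
    nlinarith
  have hBddBelow : ∀ v : ℝ, BddBelow {s : ℝ | 0 ≤ s ∧ v ≤ ψstar s} :=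
    fun v => ⟨0, fun s hs => hs.1⟩
  have hNe : ∀ v : ℝ, Set.Nonempty {s : ℝ | 0 ≤ s ∧ v ≤ ψstar s} := by
    intro v
    obtain ⟨s, hs⟩ := hne v
    exact ⟨s, hs⟩
  have hminus_nn : ∀ v : ℝ, 0 ≤ ψminus v := by
    intro v
    rw [hminus]
    exact le_csInf (hNe v) (fun s hs => hs.1)
  constructor
  · -- upper bound
    set K : ℝ := (Real.pi ^ 3 / C₀) ^ (2 / α) with hKdef
    set c : ℝ := K * lam ^ (1 / α) with hcdef
    have hbase : (1:ℝ) ≤ Real.pi ^ 3 / C₀ := by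
      rw [le_div_iff₀ hC₀0]; nlinarith [hπ3]
    have hK1 : (1:ℝ) ≤ K := by
      have := Real.rpow_le_rpow_of_exponent_le hbase
        (by positivity : (0:ℝ) ≤ 2 / α)
      rwa [Real.rpow_zero] at this
    have hlam1 : (1:ℝ) ≤ lam ^ (1 / α) := by
      have := Real.rpow_le_rpow_of_exponent_le hlam
        (by positivity : (0:ℝ) ≤ 1 / α)
      rwa [Real.rpow_zero] at this
    have hc1 : (1:ℝ) ≤ c := by nlinarith
    have hcpos : (0:ℝ) < c := by linarith
    have hKα : K ^ α = (Real.pi ^ 3 / C₀) ^ (2:ℕ) := by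
      rw [hKdef, ← Real.rpow_mul (by positivity : (0:ℝ) ≤ Real.pi ^ 3 / C₀)]
      rw [div_mul_cancel₀ 2 (ne_of_gt hα), ← Real.rpow_natCast (Real.pi ^ 3 / C₀) 2]
      norm_num
    have hlamα : (lam ^ (1 / α)) ^ α = lam := by
      rw [← Real.rpow_mul (by linarith : (0:ℝ) ≤ lam),
        one_div_mul_cancel (ne_of_gt hα), Real.rpow_one]
    have hcα : c ^ α = (Real.pi ^ 3 / C₀) ^ (2:ℕ) * lam := by
      rw [hcdef, Real.mul_rpow (by linarith : (0:ℝ) ≤ K) (by linarith : (0:ℝ) ≤ lam ^ (1 / α)),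
        hKα, hlamα]
    have hCc : C₀ * c ^ α = Real.pi ^ 6 / C₀ * lam := by
      rw [hcα]
      field_simp
    -- key: for s in the level set of u, c*s is in the level set of lam*u
    have hkey : ∀ s : ℝ, 0 ≤ s → u ≤ ψstar s → lam * u ≤ ψstar (c * s) := by
      intro s hs0 hsu
      have hspos' : 0 < s := hspos u hu s hs0 hsu
      have h1 := hstarL c hc1 s hspos'
      have hd : Real.pi ^ 6 ≤ Real.pi ^ 6 / C₀ := by
        rw [le_div_iff₀ hC₀0]; nlinarith [hπ3]
      have hπ26 : Real.pi ^ 2 ≤ Real.pi ^ 6 := by nlinarith [hπ2, hπ6, sq_nonneg (Real.pi^2), sq_nonneg Real.pi]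
      have hchain : Real.pi ^ 2 * (lam * u) ≤ Real.pi ^ 2 * ψstar (c * s) := by
        calc Real.pi ^ 2 * (lam * u) ≤ Real.pi ^ 6 / C₀ * (lam * u) := by
              nlinarith
          _ ≤ Real.pi ^ 6 / C₀ * (lam * ψstar s) := by
              apply mul_le_mul_of_nonneg_left _ (by positivity)
              nlinarith
          _ = C₀ * c ^ α * ψstar s := by rw [hCc]; ring
          _ ≤ Real.pi ^ 2 * ψstar (c * s) := h1
      exact le_of_mul_le_mul_left hchain (by positivity)
    -- conclude
    have hble : ∀ s : ℝ, 0 ≤ s → u ≤ ψstar s → ψminus (lam * u) ≤ c * s := by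
      intro s hs0 hsu
      rw [hminus]
      exact csInf_le (hBddBelow _) ⟨by positivity, hkey s hs0 hsu⟩
    have hdiv : ψminus (lam * u) / c ≤ ψminus u := by
      rw [hminus u]
      apply le_csInf (hNe u)
      intro s hs
      rw [div_le_iff₀ hcpos]
      calc ψminus (lam * u) ≤ c * s := hble s hs.1 hs.2
        _ = s * c := by ring
    calc ψminus (lam * u) = c * (ψminus (lam * u) / c) := by field_simp
      _ ≤ c * ψminus u := mul_le_mul_of_nonneg_left hdiv hcpos.le
      _ = K * lam ^ (1 / α) * ψminus u := by rw [hcdef]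
  · -- lower bound
    set c' : ℝ := (C₀ / Real.pi ^ 4) ^ (1 / α) with hc'def
    set ρ : ℝ := c' * lam ^ ((1:ℝ) / 2) with hρdef
    have hxpos : (0:ℝ) < C₀ / Real.pi ^ 4 := by positivity
    have hx1 : C₀ / Real.pi ^ 4 ≤ 1 / 4 := by
      rw [div_le_div_iff₀ (by positivity) (by norm_num)]
      nlinarith [hπ4]
    have hc'pos : (0:ℝ) < c' := Real.rpow_pos_of_pos hxpos _
    have hc'half : c' ≤ 1 / 2 := by
      have h1 : c' ≤ (C₀ / Real.pi ^ 4) ^ ((1:ℝ) / 2) := by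
        apply Real.rpow_le_rpow_of_exponent_ge hxpos (by linarith)
        rw [div_le_div_iff₀ (by norm_num) hα]
        linarith
      have h2 : (C₀ / Real.pi ^ 4) ^ ((1:ℝ) / 2) ≤ ((1:ℝ) / 4) ^ ((1:ℝ) / 2) :=
        Real.rpow_le_rpow hxpos.le hx1 (by norm_num)
      have h3 : ((1:ℝ) / 4) ^ ((1:ℝ) / 2) = 1 / 2 := by
        rw [show ((1:ℝ) / 4) = ((1:ℝ) / 2) ^ (2:ℕ) by norm_num,
          ← Real.rpow_natCast ((1:ℝ) / 2) 2, ← Real.rpow_mul (by norm_num)]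
        norm_num
      linarith
    have hlampos : (0:ℝ) < lam := by linarith
    have hsq : (lam ^ ((1:ℝ) / 2)) ^ (2:ℕ) = lam := by
      rw [← Real.rpow_natCast (lam ^ ((1:ℝ) / 2)) 2, ← Real.rpow_mul hlampos.le]
      norm_num
    have hρpos : (0:ℝ) < ρ := by
      rw [hρdef]
      exact mul_pos hc'pos (Real.rpow_pos_of_pos hlampos _)
    have hρ2 : ρ ^ 2 = c' ^ 2 * lam := by
      rw [hρdef, mul_pow, hsq]
    -- every member s of the level set of lam*u satisfies: s/ρ is in the level set of u
    have hkey : ∀ s : ℝ, 0 ≤ s → lam * u ≤ ψstar s → u ≤ ψstar (s / ρ) := by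
      intro s hs0 hsv
      have hspos' : 0 < s := hspos (lam * u) hlamu s hs0 hsv
      rcases le_or_gt ρ 1 with hρ1 | hρ1
      · have hss : s ≤ s / ρ := by
          rw [le_div_iff₀ hρpos]
          nlinarith
        have := hmono s (s / ρ) hs0 hss
        nlinarith [this]
      · have heq : ρ * (s / ρ) = s := by field_simp
        have h1 := hstarU ρ hρ1.le (s / ρ) (by positivity)
        rw [heq] at h1
        have h2 : 0 ≤ ψstar (s / ρ) := hstnn _ (by positivity)
        have hc'sq : c' ^ 2 ≤ 1 / 4 := by nlinarith [hc'pos, hc'half]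
        have h3 : 4 * ρ ^ 2 ≤ lam := by
          rw [hρ2]
          nlinarith [mul_le_mul_of_nonneg_right hc'sq hlampos.le]
        have h4 : ψstar s ≤ lam * ψstar (s / ρ) := by nlinarith
        have : lam * u ≤ lam * ψstar (s / ρ) := le_trans hsv h4
        exact le_of_mul_le_mul_left this hlampos
    -- conclude
    have hfinal : ∀ s : ℝ, 0 ≤ s → lam * u ≤ ψstar s → ρ * ψminus u ≤ s := by
      intro s hs0 hsv
      have hmem : ψminus u ≤ s / ρ := by
        rw [hminus u]
        exact csInf_le (hBddBelow _) ⟨by positivity, hkey s hs0 hsv⟩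
      calc ρ * ψminus u ≤ ρ * (s / ρ) := mul_le_mul_of_nonneg_left hmem hρpos.le
        _ = s := by field_simp
    have : ρ * ψminus u ≤ ψminus (lam * u) := by
      rw [hminus (lam * u)]
      exact le_csInf (hNe _) (fun s hs => hfinal s hs.1 hs.2)
    calc c' * lam ^ ((1:ℝ) / 2) * ψminus u = ρ * ψminus u := by rw [hρdef]
      _ ≤ ψminus (lam * u) := this
end

section
/- Let p : ℝ^d → [0,∞) be a radially nonincreasing probability density (i.e. p(x) = g(|x|) with g nonincreasing). Then for every x ≠ 0, p(x) ≤ d/((1 − 2^{-d})·ω_d) · |x|^{-d} · P(|X| ≥ |x|/2), where X has density p, P(|X| ≥ r) = ∫_{|y| ≥ r} p(y) dy, and ω_d is the surface measure of the unit sphere in ℝ^d. -/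
open MeasureTheory

theorem stmt_18 (d : ℕ) (hd : 1 ≤ d) (p : EuclideanSpace ℝ (Fin d) → ℝ) (g : ℝ → ℝ)
    (hpg : ∀ x, p x = g ‖x‖) (hg : AntitoneOn g (Set.Ici 0))
    (hnonneg : ∀ x, 0 ≤ p x) (hprob : ∫ x, p x = 1)
    (hint : Integrable p) (x : EuclideanSpace ℝ (Fin d)) (hx : x ≠ 0) :
    p x ≤ (d : ℝ) / ((1 - ((2:ℝ) ^ d)⁻¹) * (2 * Real.pi ^ ((d : ℝ) / 2) / Real.Gamma ((d : ℝ) / 2))) *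
        (‖x‖ ^ d)⁻¹ * ∫ y in {y : EuclideanSpace ℝ (Fin d) | ‖x‖ / 2 ≤ ‖y‖}, p y := by
  haveI : Nonempty (Fin d) := Fin.pos_iff_nonempty.mp hd
  set r := ‖x‖ with hr
  have rpos : 0 < r := norm_pos_iff.mpr hx
  set c : ℝ := Real.sqrt Real.pi ^ d / Real.Gamma (d / 2 + 1) with hc
  have cpos : 0 < c := by
    apply div_pos (pow_pos (Real.sqrt_pos.mpr Real.pi_pos) d)
    apply Real.Gamma_pos_of_pos
    positivity
  set A : Set (EuclideanSpace ℝ (Fin d)) :=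
    Metric.closedBall 0 r \ Metric.ball 0 (r / 2) with hA
  have hAmeas : MeasurableSet A := measurableSet_closedBall.diff measurableSet_ball
  have hmemA : ∀ y, y ∈ A ↔ r / 2 ≤ ‖y‖ ∧ ‖y‖ ≤ r := by
    intro y
    simp [hA, mem_closedBall_zero_iff, mem_ball_zero_iff, not_lt, and_comm]
  have hfin : volume (Metric.ball (0 : EuclideanSpace ℝ (Fin d)) (r / 2)) ≠ ⊤ := by
    rw [EuclideanSpace.volume_ball]
    exact ENNReal.mul_ne_top (by simp) ENNReal.ofReal_ne_top
  have hvol : volume A = ENNReal.ofReal ((1 - ((2:ℝ) ^ d)⁻¹) * r ^ d * c) := by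
    rw [hA, measure_diff (Metric.ball_subset_closedBall.trans
        (Metric.closedBall_subset_closedBall (by linarith)))
        measurableSet_ball.nullMeasurableSet hfin,
      EuclideanSpace.volume_closedBall, EuclideanSpace.volume_ball]
    simp only [Fintype.card_fin]
    rw [← ENNReal.ofReal_pow rpos.le, ← ENNReal.ofReal_pow (by linarith : (0:ℝ) ≤ r/2),
      ← ENNReal.ofReal_mul (by positivity), ← ENNReal.ofReal_mul (by positivity),
      ← ENNReal.ofReal_sub _ (by positivity)]
    congr 1
    rw [div_pow, sub_mul, sub_mul]
    ring_nf
    rw [hc]; ring_nf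
  have hvolA : (volume A).toReal = (1 - ((2:ℝ) ^ d)⁻¹) * r ^ d * c := by
    rw [hvol, ENNReal.toReal_ofReal]
    have h2 : ((2:ℝ) ^ d)⁻¹ ≤ 1 := by
      rw [inv_le_one_iff₀]; right; exact one_le_pow₀ one_le_two
    have : (0:ℝ) ≤ 1 - ((2:ℝ)^d)⁻¹ := by linarith
    positivity
  have hvolApos : 0 < (volume A).toReal := by
    rw [hvolA]
    have h2 : ((2:ℝ) ^ d)⁻¹ < 1 := by
      rw [inv_lt_one_iff₀]; right; exact one_lt_pow₀ one_lt_two (by omega)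
    have : (0:ℝ) < 1 - ((2:ℝ)^d)⁻¹ := by linarith
    positivity
  -- Step 1: p x * vol A ≤ ∫_A p
  have step1 : p x * (volume A).toReal ≤ ∫ y in A, p y := by
    have := setIntegral_mono_on (f := fun _ => p x) (g := p)
      ((integrableOn_const_iff enorm_ne_top).mpr (Or.inr (by
        rw [hvol]; exact ENNReal.ofReal_lt_top)))
      hint.integrableOn hAmeas ?_
    · rwa [setIntegral_const, smul_eq_mul, mul_comm] at this
    · intro y hy
      obtain ⟨h1, h2⟩ := (hmemA y).mp hy
      rw [hpg, hpg]
      exact hg (Set.mem_Ici.mpr (norm_nonneg y)) (Set.mem_Ici.mpr rpos.le) h2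
  -- Step 2: ∫_A p ≤ ∫_S p
  have step2 : (∫ y in A, p y) ≤
      ∫ y in {y : EuclideanSpace ℝ (Fin d) | ‖x‖ / 2 ≤ ‖y‖}, p y := by
    apply setIntegral_mono_set hint.integrableOn
      (Filter.Eventually.of_forall hnonneg)
    apply HasSubset.Subset.eventuallyLE
    intro y hy
    exact ((hmemA y).mp hy).1
  -- Combine
  have key : p x * (volume A).toReal ≤
      ∫ y in {y : EuclideanSpace ℝ (Fin d) | ‖x‖ / 2 ≤ ‖y‖}, p y := step1.trans step2
  have hconst : (d : ℝ) / ((1 - ((2:ℝ) ^ d)⁻¹) *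
      (2 * Real.pi ^ ((d : ℝ) / 2) / Real.Gamma ((d : ℝ) / 2))) * (r ^ d)⁻¹
      = ((volume A).toReal)⁻¹ := by
    rw [hvolA, hc]
    have hGam : Real.Gamma ((d:ℝ) / 2 + 1) = ((d:ℝ)/2) * Real.Gamma ((d:ℝ)/2) := by
      rw [Real.Gamma_add_one (by positivity)]
    have hGpos : 0 < Real.Gamma ((d:ℝ)/2) := Real.Gamma_pos_of_pos (by positivity)
    have hsq : Real.sqrt Real.pi ^ d = Real.pi ^ ((d:ℝ)/2) := by
      rw [← Real.rpow_natCast (Real.sqrt Real.pi) d,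
        Real.rpow_def_of_pos (Real.sqrt_pos.mpr Real.pi_pos),
        Real.log_sqrt Real.pi_pos.le, Real.rpow_def_of_pos Real.pi_pos]
      ring_nf
    have h2 : ((2:ℝ) ^ d)⁻¹ < 1 := by
      rw [inv_lt_one_iff₀]; right; exact one_lt_pow₀ one_lt_two (by omega)
    have hpos2 : (0:ℝ) < 1 - ((2:ℝ)^d)⁻¹ := by linarith
    have hdpos : (0:ℝ) < d := by exact_mod_cast hd
    rw [hGam, hsq]
    have hpipos : (0:ℝ) < Real.pi ^ ((d:ℝ)/2) := Real.rpow_pos_of_pos Real.pi_pos _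
    field_simp
  rw [hconst]
  rw [← div_eq_inv_mul, le_div_iff₀ hvolApos]
  linarith [key]
end

section
/- Let ν₁ be a symmetric measure on ℝ with density ν₁(y) symmetric and nonincreasing in |y|, defining h₁(r) = ∫_ℝ min(y²/r², 1) ν₁(dy) and ψ(u) = ∫_ℝ (1 − cos(uy)) ν₁(dy), both assumed finite. Then (2/π²)·h₁(1/u) ≤ ψ(u) ≤ 2·h₁(1/u) for all u > 0. -/
open MeasureTheory Set

-- auxiliary: integral of a constant over Ioi 0 ∩ Iio a
private lemma aux_indicator_integral (c a : ℝ) (ha : 0 ≤ a) :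
    ∫ t in Set.Ioi (0:ℝ), (Set.Iio a).indicator (fun _ => c) t = c * a := by
  rw [setIntegral_indicator measurableSet_Iio, Set.Ioi_inter_Iio, setIntegral_const]
  simp [Real.volume_Ioo, ENNReal.toReal_ofReal ha, mul_comm, ha]

private lemma key_nonneg (f g : ℝ → ℝ) (hfm : Measurable f) (hf0 : ∀ y, 0 ≤ f y)
    (hmono : AntitoneOn f (Set.Ici 0)) (hg : Continuous g)
    (hInt : IntegrableOn (fun y => g y * f y) (Set.Ioi 0))
    (hG : ∀ t, 0 ≤ t → 0 ≤ ∫ y in (0:ℝ)..t, g y) :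
    0 ≤ ∫ y in Set.Ioi (0:ℝ), g y * f y := by
  set μ : Measure ℝ := volume.restrict (Set.Ioi 0) with hμ
  set F : ℝ × ℝ → ℝ := fun p => (Set.Iio (f p.1)).indicator (fun _ => g p.1) p.2 with hF
  have hFmeas : Measurable F := by
    have h1 : MeasurableSet {p : ℝ × ℝ | p.2 < f p.1} :=
      measurableSet_lt measurable_snd (hfm.comp measurable_fst)
    have : F = Set.indicator {p : ℝ × ℝ | p.2 < f p.1} (fun p => g p.1) := by
      funext p
      simp [hF, Set.indicator_apply, Set.mem_Iio, Set.mem_setOf_eq]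
    rw [this]
    exact (hg.measurable.comp measurable_fst).indicator h1
  have hslice : ∀ y : ℝ, ∫ t, F (y, t) ∂μ = g y * f y := by
    intro y
    exact aux_indicator_integral (g y) (f y) (hf0 y)
  have hslice_norm : ∀ y : ℝ, ∫ t, ‖F (y, t)‖ ∂μ = ‖g y‖ * f y := by
    intro y
    have : (fun t => ‖F (y, t)‖) = fun t => (Set.Iio (f y)).indicator (fun _ => ‖g y‖) t := by
      funext t
      simp [hF, Set.indicator_apply]
      split <;> simp
    rw [this]
    exact aux_indicator_integral ‖g y‖ (f y) (hf0 y)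
  have hFint : Integrable F (μ.prod μ) := by
    rw [integrable_prod_iff (hFmeas.aestronglyMeasurable)]
    constructor
    · refine Filter.Eventually.of_forall fun y => ?_
      have : (fun t => F (y, t)) = (Set.Iio (f y)).indicator (fun _ => g y) := rfl
      rw [this]
      rw [integrable_indicator_iff measurableSet_Iio]
      refine (integrableOn_const_iff (C := g y)).mpr (Or.inr ?_)
      rw [Measure.restrict_apply measurableSet_Iio, Set.Iio_inter_Ioi]
      simp [Real.volume_Ioo, ENNReal.ofReal_lt_top]
    · refine (hInt.norm.congr (Filter.Eventually.of_forall fun y => ?_))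
      show ‖g y * f y‖ = ∫ t, ‖F (y, t)‖ ∂μ
      rw [hslice_norm y, norm_mul, Real.norm_eq_abs (f y), abs_of_nonneg (hf0 y)]
  have hswap : ∫ y, (∫ t, F (y, t) ∂μ) ∂μ = ∫ t, (∫ y, F (y, t) ∂μ) ∂μ :=
    integral_integral_swap hFint
  have hleft : ∫ y in Set.Ioi (0:ℝ), g y * f y = ∫ y, (∫ t, F (y, t) ∂μ) ∂μ := by
    exact integral_congr_ae (Filter.Eventually.of_forall fun y => (hslice y).symm)
  rw [hleft, hswap]
  refine setIntegral_nonneg measurableSet_Ioi fun t _ => ?_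
  -- inner integral nonneg
  have hsetm : MeasurableSet {y : ℝ | t < f y} := measurableSet_lt measurable_const hfm
  have hinner : ∫ y, F (y, t) ∂μ = ∫ y in Set.Ioi 0 ∩ {y : ℝ | t < f y}, g y := by
    have : (fun y => F (y, t)) = fun y => Set.indicator {y : ℝ | t < f y} g y := by
      funext y
      simp [hF, Set.indicator_apply, Set.mem_Iio, Set.mem_setOf_eq]
    rw [this, hμ, setIntegral_indicator hsetm]
  rw [hinner]
  set S := Set.Ioi (0:ℝ) ∩ {y : ℝ | t < f y} with hS
  have hdc : ∀ y ∈ S, ∀ z, 0 < z → z ≤ y → z ∈ S := by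
    intro y hy z hz hzy
    exact ⟨hz, lt_of_lt_of_le hy.2 (hmono hz.le (hz.le.trans hzy) hzy)⟩
  by_cases hne : S.Nonempty
  · by_cases hbd : BddAbove S
    · set s := sSup S with hs
      obtain ⟨y₀, hy₀⟩ := id hne
      have hs_pos : 0 < s := lt_of_lt_of_le hy₀.1 (le_csSup hbd hy₀)
      have hsub1 : Set.Ioo 0 s ⊆ S := by
        intro z hz
        obtain ⟨y, hyS, hzy⟩ := exists_lt_of_lt_csSup hne hz.2
        exact hdc y hyS z hz.1 hzy.le
      have hsub2 : S ⊆ Set.Ioc 0 s := fun y hy => ⟨hy.1, le_csSup hbd hy⟩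
      have haeeq : S =ᵐ[volume] Set.Ioc 0 s := by
        rw [MeasureTheory.ae_eq_set]
        constructor
        · rw [Set.diff_eq_empty.mpr hsub2]; simp
        · refine measure_mono_null (fun z hz => ?_) (Real.volume_singleton (a := s))
          rcases lt_or_eq_of_le hz.1.2 with h | h
          · exact absurd (hsub1 ⟨hz.1.1, h⟩) hz.2
          · exact h
      rw [setIntegral_congr_set haeeq, ← intervalIntegral.integral_of_le hs_pos.le]
      exact hG s hs_pos.le
    · have hSeq : S = Set.Ioi 0 := by
        refine subset_antisymm Set.inter_subset_left fun y hy => ?_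
        obtain ⟨z, hzS, hyz⟩ := not_bddAbove_iff.mp hbd y
        exact hdc z hzS y hy hyz.le
      rw [hSeq]
      by_cases hig : IntegrableOn g (Set.Ioi 0)
      · have htend := intervalIntegral_tendsto_integral_Ioi 0 hig Filter.tendsto_id
        exact ge_of_tendsto htend (Filter.eventually_atTop.mpr ⟨0, fun b hb => hG b hb⟩)
      · rw [integral_undef hig]
  · rw [Set.not_nonempty_iff_eq_empty.mp hne]
    simp

private lemma g1_cont : Continuous (fun r : ℝ => (1 - Real.cos r) - 2 / Real.pi ^ 2 * min (r ^ 2) 1) := by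
  fun_prop

private lemma min_intervalIntegrable (a b : ℝ) :
    IntervalIntegrable (fun r : ℝ => min (r ^ 2) 1) MeasureTheory.volume a b := by
  exact (Continuous.min (by fun_prop) continuous_const).intervalIntegrable a b

private lemma integral_min_eq (s : ℝ) (hs : 1 ≤ s) :
    ∫ r in (0:ℝ)..s, min (r ^ 2) 1 = s - 2/3 := by
  have h1 : ∫ r in (0:ℝ)..1, min (r ^ 2) 1 = 1/3 := by
    have : ∫ r in (0:ℝ)..1, min (r ^ 2) 1 = ∫ r in (0:ℝ)..1, r ^ 2 := by
      refine intervalIntegral.integral_congr fun r hr => ?_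
      rw [Set.uIcc_of_le (by norm_num)] at hr
      have : r ^ 2 ≤ 1 := by nlinarith [hr.1, hr.2]
      simp [min_eq_left this]
    rw [this, integral_pow]
    norm_num
  have h2 : ∫ r in (1:ℝ)..s, min (r ^ 2) 1 = s - 1 := by
    have : ∫ r in (1:ℝ)..s, min (r ^ 2) 1 = ∫ r in (1:ℝ)..s, (1:ℝ) := by
      refine intervalIntegral.integral_congr fun r hr => ?_
      rw [Set.uIcc_of_le hs] at hr
      have : (1:ℝ) ≤ r ^ 2 := by nlinarith [hr.1]
      simp [min_eq_right this]
    rw [this]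
    simp
  have := intervalIntegral.integral_add_adjacent_intervals
    (min_intervalIntegrable 0 1) (min_intervalIntegrable 1 s)
  rw [h1, h2] at this
  rw [← this]
  ring

private lemma g1_integral_nonneg (s : ℝ) (hs : 0 ≤ s) :
    0 ≤ ∫ r in (0:ℝ)..s, ((1 - Real.cos r) - 2 / Real.pi ^ 2 * min (r ^ 2) 1) := by
  rcases le_or_gt s Real.pi with hsp | hsp
  · refine intervalIntegral.integral_nonneg hs fun r hr => ?_
    have hr0 : 0 ≤ r := hr.1
    have hrp : r ≤ Real.pi := hr.2.trans hsp
    have hcos : Real.cos r ≤ 1 - 2 / Real.pi ^ 2 * r ^ 2 :=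
      Real.cos_le_one_sub_mul_cos_sq (by rw [abs_of_nonneg hr0]; exact hrp)
    have hmin : min (r ^ 2) 1 ≤ r ^ 2 := min_le_left _ _
    have hpi : (0:ℝ) < 2 / Real.pi ^ 2 := by positivity
    nlinarith
  · have h1s : (1:ℝ) ≤ s := le_trans (by linarith [Real.pi_gt_three]) hsp.le
    have hA : ∫ r in (0:ℝ)..s, (1 - Real.cos r) = s - Real.sin s := by
      rw [intervalIntegral.integral_sub intervalIntegrable_const
        (Real.continuous_cos.intervalIntegrable 0 s), integral_cos]
      simp
    rw [intervalIntegral.integral_sub (f := fun r => 1 - Real.cos r)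
      (g := fun r => 2 / Real.pi ^ 2 * min (r ^ 2) 1)
      ((continuous_const.sub Real.continuous_cos).intervalIntegrable 0 s)
      ((continuous_const.mul ((Continuous.min (f := fun r : ℝ => r ^ 2) (by fun_prop) continuous_const))).intervalIntegrable 0 s),
      hA, intervalIntegral.integral_const_mul, integral_min_eq s h1s]
    have hsin : Real.sin s ≤ 1 := Real.sin_le_one s
    have hpi3 : (3:ℝ) < Real.pi := Real.pi_gt_three
    have hpi4 : Real.pi < 3.15 := by linarith [Real.pi_lt_d2]
    have hpisq : (0:ℝ) < Real.pi ^ 2 := by positivity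
    rw [div_mul_eq_mul_div, sub_nonneg, div_le_iff₀ hpisq]
    have h27 : (27:ℝ) < Real.pi ^ 3 := by nlinarith
    have h99 : Real.pi ^ 2 < 10 := by nlinarith
    have hprod : Real.pi * (Real.pi ^ 2 - 2) < s * (Real.pi ^ 2 - 2) := by
      apply mul_lt_mul_of_pos_right hsp; nlinarith
    have hsin2 : Real.pi ^ 2 * Real.sin s ≤ Real.pi ^ 2 := by nlinarith
    nlinarith [hprod, hsin2, h27, h99]

theorem stmt_19 (f : ℝ → ℝ) (hsym : ∀ y, f (-y) = f y) (hnonneg : ∀ y, 0 ≤ f y)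
    (hmono : AntitoneOn f (Set.Ici 0))
    (hInt1 : ∀ r > (0:ℝ), Integrable (fun y => min (y ^ 2 / r ^ 2) 1 * f y))
    (hInt2 : ∀ u : ℝ, Integrable (fun y => (1 - Real.cos (u * y)) * f y))
    (u : ℝ) (hu : 0 < u) :
    (2 / Real.pi ^ 2) * (∫ y : ℝ, min (y ^ 2 / (1 / u) ^ 2) 1 * f y) ≤
        (∫ y : ℝ, (1 - Real.cos (u * y)) * f y) ∧
      (∫ y : ℝ, (1 - Real.cos (u * y)) * f y) ≤
        2 * ∫ y : ℝ, min (y ^ 2 / (1 / u) ^ 2) 1 * f y := by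
  have hupos : (0:ℝ) < 1 / u := by positivity
  have hmin_eq : ∀ y : ℝ, y ^ 2 / (1 / u) ^ 2 = (u * y) ^ 2 := by
    intro y
    field_simp
  have hImin := hInt1 (1/u) hupos
  have hIcos := hInt2 u
  -- measurability of f
  have hfm : Measurable f := by
    have hanti : Antitone (fun x : ℝ => f (max x 0)) := by
      intro a b hab
      exact hmono (le_max_right a 0) (le_max_right b 0) (max_le_max hab le_rfl)
    have hfeq : f = fun y => f (max |y| 0) := by
      funext y
      rw [max_eq_left (abs_nonneg y)]
      rcases le_or_gt 0 y with h | h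
      · rw [abs_of_nonneg h]
      · rw [abs_of_neg h, hsym]
    rw [hfeq]
    exact hanti.measurable.comp measurable_abs
  constructor
  · -- lower bound
    rw [← sub_nonneg]
    have hsub : (∫ y : ℝ, (1 - Real.cos (u * y)) * f y) -
        (2 / Real.pi ^ 2) * (∫ y : ℝ, min (y ^ 2 / (1 / u) ^ 2) 1 * f y)
        = ∫ y : ℝ, ((1 - Real.cos (u * y)) - 2 / Real.pi ^ 2 * min (y ^ 2 / (1 / u) ^ 2) 1) * f y := by
      rw [← integral_const_mul, ← integral_sub hIcos (hImin.const_mul _)]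
      congr 1
      funext y
      ring
    rw [hsub]
    set E : ℝ → ℝ := fun y =>
      ((1 - Real.cos (u * y)) - 2 / Real.pi ^ 2 * min (y ^ 2 / (1 / u) ^ 2) 1) * f y with hE
    have hEint : Integrable E := by
      refine ((hIcos.sub (hImin.const_mul (2 / Real.pi ^ 2))).congr
        (Filter.Eventually.of_forall fun y => ?_))
      show (1 - Real.cos (u * y)) * f y - 2 / Real.pi ^ 2 * (min (y ^ 2 / (1 / u) ^ 2) 1 * f y) = E y
      rw [hE]
      ring
    have hEeven : ∀ y, E (-y) = E y := by
      intro y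
      rw [hE]
      simp only [mul_neg, Real.cos_neg, neg_sq, hsym]
    have habs : ∫ y : ℝ, E y = ∫ y : ℝ, E |y| := by
      congr 1
      funext y
      rcases le_or_gt 0 y with h | h
      · rw [abs_of_nonneg h]
      · rw [abs_of_neg h, hEeven]
    rw [habs, integral_comp_abs (f := E)]
    have hkey : 0 ≤ ∫ y in Set.Ioi (0:ℝ), E y := by
      refine key_nonneg f
        (fun y => (1 - Real.cos (u * y)) - 2 / Real.pi ^ 2 * min (y ^ 2 / (1 / u) ^ 2) 1)
        hfm hnonneg hmono (by fun_prop) hEint.integrableOn ?_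
      intro t ht
      have hGeq : (fun y => (1 - Real.cos (u * y)) - 2 / Real.pi ^ 2 * min (y ^ 2 / (1 / u) ^ 2) 1)
          = fun y => ((1 - Real.cos (u * y)) - 2 / Real.pi ^ 2 * min ((u * y) ^ 2) 1) := by
        funext y
        rw [hmin_eq y]
      rw [hGeq,
        intervalIntegral.integral_comp_mul_left
          (fun r => (1 - Real.cos r) - 2 / Real.pi ^ 2 * min (r ^ 2) 1) hu.ne']
      rw [mul_zero, smul_eq_mul]
      exact mul_nonneg (by positivity) (g1_integral_nonneg (u * t) (mul_nonneg hu.le ht))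
    linarith [hkey]
  · -- upper bound
    rw [← integral_const_mul]
    refine integral_mono hIcos (hImin.const_mul 2) fun y => ?_
    show (1 - Real.cos (u * y)) * f y ≤ 2 * (min (y ^ 2 / (1 / u) ^ 2) 1 * f y)
    have hm : 1 - Real.cos (u * y) ≤ 2 * min (y ^ 2 / (1 / u) ^ 2) 1 := by
      rw [hmin_eq y]
      rcases le_total ((u * y) ^ 2) 1 with h | h
      · rw [min_eq_left h]
        have := Real.one_sub_sq_div_two_le_cos (x := u * y)
        nlinarith [sq_nonneg (u * y)]
      · rw [min_eq_right h]
        have := Real.neg_one_le_cos (u * y)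
        linarith
    calc (1 - Real.cos (u * y)) * f y ≤ (2 * min (y ^ 2 / (1 / u) ^ 2) 1) * f y :=
          mul_le_mul_of_nonneg_right hm (hnonneg y)
      _ = 2 * (min (y ^ 2 / (1 / u) ^ 2) 1 * f y) := by ring
end
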